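/- Let A be a finite-dimensional K-algebra (not assumed associative a priori) equipped with a nondegenerate bilinear form (·,·) satisfying (xy, z) = (x, yz) for all x,y,z ∈ A (define the trilinear form (x,y,z) := (xy, z)). Fix a basis (b_i) of A and let F^{ij} be the inverse matrix of F_{ij} = (b_i, b_j). Then multiplication in A is associative if and only if for all x₁, x₂, x₃, x₄ ∈ A: Σ_{i,j} (x₁, x₂, b_i) F^{ij} (b_j, x₃, x₄) = Σ_{i,j} (x₄, x₁, b_i) F^{ij} (b_j, x₂, x₃). -/

import Mathlib

/-!
Inserting a left inverse of the Gram matrix between two basis expansions is the identity: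
`∑ᵢⱼ B(u, bᵢ) F^{ij} B(bⱼ, v) = B(u, v)`. By invariance the crossing sums are therefore
`(x₁x₂, x₃x₄)` and `(x₄x₁, x₂x₃)`, and by invariance and symmetry their difference is
`((x₁x₂)x₃ - x₁(x₂x₃), x₄)`, which vanishes for all `x₄` exactly when the associator vanishes,
the form being nondegenerate.
-/

open Matrix

namespace LinearMap

variable {R M₁ M₂ ι₁ ι₂ : Type*} [CommRing R] [AddCommGroup M₁] [Module R M₁]
  [AddCommGroup M₂] [Module R M₂] [Fintype ι₁] [Fintype ι₂]
  (B : M₁ →ₗ[R] M₂ →ₗ[R] R) (b₁ : Module.Basis ι₁ R M₁) (b₂ : Module.Basis ι₂ R M₂)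

theorem sum_apply_basis_mul_repr (x : M₁) (y : M₂) :
    ∑ i, B x (b₂ i) * b₂.repr y i = B x y := by
  conv_rhs => rw [← b₂.sum_repr y]
  simp only [map_sum, map_smul, smul_eq_mul, mul_comm]

theorem toMatrix₂_mulVec_repr [DecidableEq ι₁] [DecidableEq ι₂] (y : M₂) :
    toMatrix₂ b₁ b₂ B *ᵥ b₂.repr y = fun i => B (b₁ i) y := by
  ext i
  simp only [mulVec, dotProduct, toMatrix₂_apply, sum_apply_basis_mul_repr]

theorem sum_apply_basis_mul_leftInv_toMatrix₂_mul_apply_basis [DecidableEq ι₁] [DecidableEq ι₂]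
    {F : Matrix ι₂ ι₁ R}
    (hF : F * toMatrix₂ b₁ b₂ B = 1) (u : M₁) (v : M₂) :
    ∑ i, ∑ j, B u (b₂ i) * F i j * B (b₁ j) v = B u v := by
  have hrepr : F *ᵥ (fun j => B (b₁ j) v) = b₂.repr v := by
    rw [← toMatrix₂_mulVec_repr B b₁ b₂, mulVec_mulVec, hF, one_mulVec]
  calc ∑ i, ∑ j, B u (b₂ i) * F i j * B (b₁ j) v
      = ∑ i, B u (b₂ i) * (F *ᵥ fun j => B (b₁ j) v) i := by
        simp only [mulVec, dotProduct, Finset.mul_sum, mul_assoc]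
    _ = B u v := by rw [hrepr, sum_apply_basis_mul_repr]

end LinearMap

section InvariantForm

variable {R A : Type*} [CommRing R] [AddCommGroup A] [Module R A]
  {mul : A →ₗ[R] A →ₗ[R] A} {B : A →ₗ[R] A →ₗ[R] R}

theorem apply_associator_eq (hsymm : ∀ x y, B x y = B y x)
    (hinv : ∀ x y z, B (mul x y) z = B x (mul y z)) (x y z w : A) :
    B (mul (mul x y) z - mul x (mul y z)) w = B (mul x y) (mul z w) - B (mul w x) (mul y z) := by
  rw [map_sub, LinearMap.sub_apply, hinv (mul x y), hsymm (mul x (mul y z)), ← hinv w]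

theorem assoc_iff_crossing (hsymm : ∀ x y, B x y = B y x) (hnondeg : B.SeparatingLeft)
    (hinv : ∀ x y z, B (mul x y) z = B x (mul y z)) :
    (∀ x y z, mul (mul x y) z = mul x (mul y z)) ↔
      ∀ x₁ x₂ x₃ x₄, B (mul x₁ x₂) (mul x₃ x₄) = B (mul x₄ x₁) (mul x₂ x₃) := by
  simp_rw [← sub_eq_zero (a := B (mul _ _) _), ← apply_associator_eq hsymm hinv]
  refine ⟨fun h x y z w => by rw [h, sub_self, map_zero, LinearMap.zero_apply], fun h x y z => ?_⟩
  exact sub_eq_zero.mp (hnondeg _ (h x y z))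

theorem sum_apply_basis_mul_leftInv_toMatrix₂_mul_apply_basis_mul {ι : Type*} [Fintype ι] [DecidableEq ι]
    (hinv : ∀ x y z, B (mul x y) z = B x (mul y z)) (b : Module.Basis ι R A) {F : Matrix ι ι R}
    (hF : F * LinearMap.toMatrix₂ b b B = 1) (u x y : A) :
    ∑ i, ∑ j, B u (b i) * F i j * B (mul (b j) x) y = B u (mul x y) := by
  simp only [hinv (b _)]
  exact B.sum_apply_basis_mul_leftInv_toMatrix₂_mul_apply_basis b b hF u _

end InvariantForm

theorem stmt1_general {K A : Type*} [Field K] [AddCommGroup A] [Module K A]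
    (mul : A →ₗ[K] A →ₗ[K] A)
    (B : A →ₗ[K] A →ₗ[K] K)
    (hsymm : ∀ x y, B x y = B y x)
    (hnondeg : ∀ x, (∀ y, B x y = 0) → x = 0)
    (hinv : ∀ x y z, B (mul x y) z = B x (mul y z))
    {ι : Type*} [Fintype ι] [DecidableEq ι]
    (b : Module.Basis ι K A)
    (Finv : Matrix ι ι K)
    (hFinv : Finv * (Matrix.of fun i j => B (b i) (b j)) = 1) :
    (∀ x y z : A, mul (mul x y) z = mul x (mul y z)) ↔
      (∀ x₁ x₂ x₃ x₄ : A,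
        ∑ i, ∑ j, B (mul x₁ x₂) (b i) * Finv i j * B (mul (b j) x₃) x₄ =
        ∑ i, ∑ j, B (mul x₄ x₁) (b i) * Finv i j * B (mul (b j) x₂) x₃) := by
  have hF : Finv * LinearMap.toMatrix₂ b b B = 1 := by
    rw [← hFinv]
    congr 1
    exact Matrix.ext fun i j => LinearMap.toMatrix₂_apply b b B i j
  simp only [sum_apply_basis_mul_leftInv_toMatrix₂_mul_apply_basis_mul hinv b hF]
  exact assoc_iff_crossing hsymm hnondeg hinv

/-- For a finite-dimensional algebra (multiplication a bilinear map,
not assumed associative) with a nondegenerate symmetric invariant bilinear form,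
a basis `b` and the inverse Gram matrix `Finv`, associativity of the
multiplication is equivalent to the "crossing symmetry"
`∑ᵢⱼ (x₁,x₂,bᵢ) F^{ij} (bⱼ,x₃,x₄) = ∑ᵢⱼ (x₄,x₁,bᵢ) F^{ij} (bⱼ,x₂,x₃)`,
where `(x,y,z) := B (xy) z`. -/
theorem stmt1 {K A : Type*} [Field K] [AddCommGroup A] [Module K A]
    [FiniteDimensional K A]
    (mul : A →ₗ[K] A →ₗ[K] A)
    (B : A →ₗ[K] A →ₗ[K] K)
    (hsymm : ∀ x y, B x y = B y x)
    (hnondeg : ∀ x, (∀ y, B x y = 0) → x = 0)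
    (hinv : ∀ x y z, B (mul x y) z = B x (mul y z))
    {ι : Type*} [Fintype ι] [DecidableEq ι]
    (b : Module.Basis ι K A)
    (Finv : Matrix ι ι K)
    (hFinv : Finv * (Matrix.of fun i j => B (b i) (b j)) = 1)
    (hFinv' : (Matrix.of fun i j => B (b i) (b j)) * Finv = 1) :
    (∀ x y z : A, mul (mul x y) z = mul x (mul y z)) ↔
      (∀ x₁ x₂ x₃ x₄ : A,
        ∑ i, ∑ j, B (mul x₁ x₂) (b i) * Finv i j * B (mul (b j) x₃) x₄ =
        ∑ i, ∑ j, B (mul x₄ x₁) (b i) * Finv i j * B (mul (b j) x₂) x₃) :=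
  stmt1_general mul B hsymm hnondeg hinv b Finv hFinv
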